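/- Let n, N be positive integers and y_1, …, y_N ∈ ℝⁿ. For s, σ > 0 let ε*_{s,σ}(x) = (1/(sσ)) · ( x − s · (Σ_i N(x; s y_i, s²σ²I) y_i)/(Σ_i N(x; s y_i, s²σ²I)) ) be the optimal denoiser. Then for every x_0, ε ∈ ℝⁿ and every choice of s = s(σ) > 0, ε*_{s,σ}( s (x_0 + σ ε) ) → ε as σ → ∞. In other words, evaluated on the forward-perturbed input x_t = s x_0 + s σ ε, the optimal denoiser converges to the identity mapping ε ↦ ε in the high-noise limit. -/

import Mathlib

/-!
Writing `w` for the Gaussian-weighted mean of the data points, the input `s (x₀ + σ ε)` gives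
`ε*_{s,σ} = (1/(sσ)) (s (x₀ + σ ε) − s w) = ε + σ⁻¹ (x₀ − w)`: the scale `s` cancels exactly.
Since `w` is a convex combination of the `yᵢ`, `‖w‖ ≤ ∑ᵢ ‖yᵢ‖` uniformly in `s` and `σ`, so the
error is `O(1/σ)`.
-/

open MeasureTheory Real Finset Filter Topology

/-- Isotropic Gaussian density `N(x; μ, τ²I)` on `ℝⁿ`. -/
noncomputable def gaussDensity (n : ℕ) (μ : EuclideanSpace ℝ (Fin n)) (τ : ℝ)
    (x : EuclideanSpace ℝ (Fin n)) : ℝ :=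
  (2 * Real.pi * τ ^ 2) ^ (-(n : ℝ) / 2) * Real.exp (-‖x - μ‖ ^ 2 / (2 * τ ^ 2))

/-- The optimal denoiser
`ε*_{s,σ}(x) = (1/(sσ)) (x − s (Σᵢ N(x; s yᵢ, s²σ²I) yᵢ) / (Σᵢ N(x; s yᵢ, s²σ²I)))`. -/
noncomputable def optDenoiser (n N : ℕ) (y : Fin N → EuclideanSpace ℝ (Fin n)) (s σ : ℝ)
    (x : EuclideanSpace ℝ (Fin n)) : EuclideanSpace ℝ (Fin n) :=
  (1 / (s * σ)) •
    (x - s • ((∑ i, gaussDensity n (s • y i) (s * σ) x)⁻¹ •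
      ∑ i, gaussDensity n (s • y i) (s * σ) x • y i))

theorem gaussDensity_nonneg (n : ℕ) (μ : EuclideanSpace ℝ (Fin n)) (τ : ℝ)
    (x : EuclideanSpace ℝ (Fin n)) : 0 ≤ gaussDensity n μ τ x :=
  mul_nonneg (Real.rpow_nonneg (by positivity) _) (Real.exp_pos _).le

theorem Finset.norm_centerMass_le_sum_norm {ι E : Type*} [SeminormedAddCommGroup E]
    [NormedSpace ℝ E] (t : Finset ι) {w : ι → ℝ} (hw : ∀ i ∈ t, 0 ≤ w i) (z : ι → E) :
    ‖t.centerMass w z‖ ≤ ∑ i ∈ t, ‖z i‖ := by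
  have hS : 0 ≤ ∑ i ∈ t, w i := sum_nonneg hw
  rw [centerMass, smul_sum]
  refine norm_sum_le_of_le t fun i hi => ?_
  rw [smul_smul, norm_smul, Real.norm_of_nonneg (mul_nonneg (inv_nonneg.2 hS) (hw i hi))]
  exact mul_le_of_le_one_left (norm_nonneg _)
    (inv_mul_le_one_of_le₀ (single_le_sum hw hi) hS)

theorem optDenoiser_smul_add_smul (n N : ℕ) (y : Fin N → EuclideanSpace ℝ (Fin n)) {s σ : ℝ}
    (hs : s ≠ 0) (hσ : σ ≠ 0) (x₀ ε : EuclideanSpace ℝ (Fin n)) :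
    optDenoiser n N y s σ (s • (x₀ + σ • ε)) =
      ε + σ⁻¹ • (x₀ - univ.centerMass (fun i => gaussDensity n (s • y i) (s * σ)
        (s • (x₀ + σ • ε))) y) := by
  have hcoef : 1 / (s * σ) * s = σ⁻¹ := by field_simp
  rw [optDenoiser, ← centerMass, ← smul_sub, smul_smul, hcoef, smul_sub, smul_add, smul_smul,
    inv_mul_cancel₀ hσ, one_smul, smul_sub]
  abel

theorem norm_optDenoiser_smul_add_smul_sub_le (n N : ℕ) (y : Fin N → EuclideanSpace ℝ (Fin n))
    {s σ : ℝ} (hs : s ≠ 0) (hσ : 0 < σ) (x₀ ε : EuclideanSpace ℝ (Fin n)) :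
    ‖optDenoiser n N y s σ (s • (x₀ + σ • ε)) - ε‖ ≤ σ⁻¹ * (‖x₀‖ + ∑ i, ‖y i‖) := by
  rw [optDenoiser_smul_add_smul n N y hs hσ.ne', add_sub_cancel_left, norm_smul,
    Real.norm_of_nonneg (inv_nonneg.2 hσ.le)]
  gcongr
  refine (norm_sub_le _ _).trans ?_
  gcongr
  exact univ.norm_centerMass_le_sum_norm (fun i _ => gaussDensity_nonneg _ _ _ _) y

theorem optDenoiser_tendsto_identity_high_noise_general (n N : ℕ)
    (y : Fin N → EuclideanSpace ℝ (Fin n)) (x₀ ε : EuclideanSpace ℝ (Fin n))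
    (s : ℝ → ℝ) (hs : ∀ σ, 0 < s σ) :
    Tendsto (fun σ : ℝ => optDenoiser n N y (s σ) σ ((s σ) • (x₀ + σ • ε)))
      atTop (𝓝 ε) := by
  rw [tendsto_iff_norm_sub_tendsto_zero]
  refine squeeze_zero' (Eventually.of_forall fun σ => norm_nonneg _) ?_
    (by simpa using tendsto_inv_atTop_zero.mul_const (‖x₀‖ + ∑ i, ‖y i‖))
  filter_upwards [eventually_gt_atTop 0] with σ hσ
  exact norm_optDenoiser_smul_add_smul_sub_le n N y (hs σ).ne' hσ x₀ ε

/-- High-noise limit: evaluated on the forward-perturbed input `x_t = s(x₀ + σ ε)`, the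
optimal denoiser converges to the identity mapping `ε ↦ ε` as `σ → ∞`, for any choice of
scaling `s = s(σ) > 0`. -/
theorem optDenoiser_tendsto_identity_high_noise (n N : ℕ) (hn : 0 < n) (hN : 0 < N)
    (y : Fin N → EuclideanSpace ℝ (Fin n)) (x₀ ε : EuclideanSpace ℝ (Fin n))
    (s : ℝ → ℝ) (hs : ∀ σ, 0 < s σ) :
    Tendsto (fun σ : ℝ => optDenoiser n N y (s σ) σ ((s σ) • (x₀ + σ • ε)))
      atTop (𝓝 ε) :=
  optDenoiser_tendsto_identity_high_noise_general n N y x₀ ε s hs
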